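/- arXiv:1607.06705 — 5 statements merged into one kernel-verified Lean document; each statement's English description precedes it below -/
import Mathlib

section
/- Let R be an integral domain and let J ⊆ I be nonzero ideals of R. Then J is a t-reduction of I if and only if J is a t-reduction of I_t, if and only if J_t is a t-reduction of I_t. -/
open scoped nonZeroDivisors

/-- The `v`-operation (divisorial closure) on `R`-submodules of the fraction field `K`:
`I_v = (I⁻¹)⁻¹` where `I⁻¹ = (R : I) = 1 / I`. -/
noncomputable def vS (R K : Type*) [CommRing R] [Field K] [Algebra R K]
    (I : Submodule R K) : Submodule R K := 1 / (1 / I)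

/-- The `t`-operation: `I_t = ⋃ J_v` where `J` ranges over nonzero finitely generated
sub-ideals of `I`. -/
noncomputable def tS (R K : Type*) [CommRing R] [Field K] [Algebra R K]
    (I : Submodule R K) : Submodule R K :=
  ⨆ J ∈ {J : Submodule R K | J ≠ ⊥ ∧ J.FG ∧ J ≤ I}, vS R K J

/-- The image of an ideal of `R` in the fraction field `K`, as an `R`-submodule. -/
noncomputable def idealToSub (R K : Type*) [CommRing R] [Field K] [Algebra R K]
    (I : Ideal R) : Submodule R K := Submodule.map (Algebra.linearMap R K) I

/-- The `t`-closure of an ideal of `R`, computed in the fraction field `K`. -/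
noncomputable def tI (R K : Type*) [CommRing R] [Field K] [Algebra R K]
    (I : Ideal R) : Submodule R K := tS R K (idealToSub R K I)

/-- The `v`-closure of an ideal of `R`, computed in the fraction field `K`. -/
noncomputable def vI (R K : Type*) [CommRing R] [Field K] [Algebra R K]
    (I : Ideal R) : Submodule R K := vS R K (idealToSub R K I)

/-- `J` is a `t`-reduction of the `R`-submodule `I` of `K`:
`(J · I^n)_t = (I^(n+1))_t` for some `n ≥ 0`. -/
noncomputable def IsTRedS (R K : Type*) [CommRing R] [Field K] [Algebra R K]
    (J I : Submodule R K) : Prop :=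
  ∃ n : ℕ, tS R K (J * I ^ n) = tS R K (I ^ (n + 1))

/-!
The `t`-operation is extensive, monotone and idempotent, and satisfies `A * B_t ≤ (A * B)_t`
(checked on principal `A`, where `(a) * L` stays nonzero and finitely generated). Hence
`(A * B)_t = (A_t * B_t)_t` depends only on `A_t` and `B_t`, and neither `I ↦ I_t` nor `J ↦ J_t`
changes either side of `(J * I ^ n)_t = (I ^ (n + 1))_t`.
-/

theorem Submodule.one_div_le_one_div_of_le {R A : Type*} [CommSemiring R] [CommSemiring A]
    [Algebra R A] {I J : Submodule R A} (h : I ≤ J) : 1 / J ≤ 1 / I :=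
  Submodule.le_div_iff_mul_le.mpr <|
    (mul_le_mul_right h _).trans <| by rw [mul_comm]; exact Submodule.mul_one_div_le_one

section TOperation

variable {R K : Type*} [CommRing R] [Field K] [Algebra R K]

lemma le_vS (I : Submodule R K) : I ≤ vS R K I :=
  Submodule.le_div_iff_mul_le.mpr Submodule.mul_one_div_le_one

lemma vS_mono {I J : Submodule R K} (h : I ≤ J) : vS R K I ≤ vS R K J :=
  Submodule.one_div_le_one_div_of_le (Submodule.one_div_le_one_div_of_le h)

lemma vS_vS (I : Submodule R K) : vS R K (vS R K I) = vS R K I :=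
  le_antisymm (Submodule.one_div_le_one_div_of_le (le_vS (1 / I))) (le_vS _)

lemma mul_vS_le (A B : Submodule R K) : A * vS R K B ≤ vS R K (A * B) := by
  have hA : A * (1 / (A * B)) ≤ 1 / B := by
    rw [Submodule.le_div_iff_mul_le, mul_right_comm]
    exact Submodule.mul_one_div_le_one
  unfold vS
  rw [Submodule.le_div_iff_mul_le]
  calc A * (1 / (1 / B)) * (1 / (A * B))
        = A * (1 / (A * B)) * (1 / (1 / B)) := mul_right_comm _ _ _
    _ ≤ 1 / B * (1 / (1 / B)) := mul_le_mul_left hA _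
    _ ≤ 1 := Submodule.mul_one_div_le_one

lemma vS_le_tS {I J : Submodule R K} (hJ0 : J ≠ ⊥) (hJ : J.FG) (hJI : J ≤ I) :
    vS R K J ≤ tS R K I :=
  le_iSup₂_of_le J ⟨hJ0, hJ, hJI⟩ le_rfl

lemma tS_mono {I J : Submodule R K} (h : I ≤ J) : tS R K I ≤ tS R K J :=
  iSup₂_le fun _ hL => vS_le_tS hL.1 hL.2.1 (hL.2.2.trans h)

lemma le_tS (I : Submodule R K) : I ≤ tS R K I := by
  intro x hx
  rcases eq_or_ne x 0 with rfl | hx0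
  · exact zero_mem _
  · exact vS_le_tS (by simpa using hx0) (Submodule.fg_span_singleton x)
      ((Submodule.span_singleton_le_iff_mem x I).mpr hx)
      (le_vS _ (Submodule.mem_span_singleton_self x))

/- The `L_v` with `L ≤ I` nonzero and finitely generated form a directed family, and finitely
generated submodules are compact elements of the lattice. -/
lemma exists_le_vS_of_fg_le_tS {I J : Submodule R K} (hJ0 : J ≠ ⊥) (hJ : J.FG)
    (hJI : J ≤ tS R K I) :
    ∃ L ∈ {L : Submodule R K | L ≠ ⊥ ∧ L.FG ∧ L ≤ I}, J ≤ vS R K L := by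
  set S := {L : Submodule R K | L ≠ ⊥ ∧ L.FG ∧ L ≤ I}
  have hS : S.Nonempty := by
    by_contra! hS
    simp only [tS, S, hS, Set.mem_empty_iff_false, iSup_false, iSup_bot, le_bot_iff] at hJI
    exact hJ0 hJI
  have hdir : DirectedOn (· ≤ ·) (vS R K '' S) := by
    rintro _ ⟨L₁, hL₁, rfl⟩ _ ⟨L₂, hL₂, rfl⟩
    have hsup : L₁ ⊔ L₂ ∈ S :=
      ⟨fun h => hL₁.1 (eq_bot_iff.mpr (h ▸ le_sup_left)), hL₁.2.1.sup hL₂.2.1,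
        sup_le hL₁.2.2 hL₂.2.2⟩
    exact ⟨_, ⟨_, hsup, rfl⟩, vS_mono le_sup_left, vS_mono le_sup_right⟩
  have hcompact := (Submodule.fg_iff_compact J).mp hJ
  rw [CompleteLattice.isCompactElement_iff_le_of_directed_sSup_le] at hcompact
  obtain ⟨_, ⟨L, hL, rfl⟩, hJL⟩ := hcompact _ (hS.image _) hdir (by rwa [sSup_image])
  exact ⟨L, hL, hJL⟩

lemma tS_tS (I : Submodule R K) : tS R K (tS R K I) = tS R K I := by
  refine le_antisymm (iSup₂_le fun J ⟨hJ0, hJ, hJI⟩ => ?_) (le_tS _)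
  obtain ⟨L, ⟨hL0, hL, hLI⟩, hJL⟩ := exists_le_vS_of_fg_le_tS hJ0 hJ hJI
  calc vS R K J ≤ vS R K (vS R K L) := vS_mono hJL
    _ = vS R K L := vS_vS L
    _ ≤ tS R K I := vS_le_tS hL0 hL hLI

lemma span_singleton_mul_tS_le (a : K) (B : Submodule R K) :
    Submodule.span R {a} * tS R K B ≤ tS R K (Submodule.span R {a} * B) := by
  rcases eq_or_ne a 0 with rfl | ha
  · simp
  simp only [tS, Submodule.mul_iSup]
  refine iSup₂_le fun L ⟨hL0, hL, hLB⟩ => (mul_vS_le _ _).trans (vS_le_tS ?_ ?_ ?_)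
  · simp [Submodule.mul_eq_bot, ha, hL0]
  · exact (Submodule.fg_span_singleton a).mul hL
  · exact mul_le_mul_right hLB _

lemma mul_tS_le (A B : Submodule R K) : A * tS R K B ≤ tS R K (A * B) := by
  refine Submodule.mul_le.mpr fun a ha x hx => ?_
  have hspan : Submodule.span R {a} ≤ A := (Submodule.span_singleton_le_iff_mem a A).mpr ha
  exact tS_mono (mul_le_mul_left hspan B) <| span_singleton_mul_tS_le a B <|
    Submodule.mul_mem_mul (Submodule.mem_span_singleton_self a) hx

lemma tS_mul_tS_right (A B : Submodule R K) : tS R K (A * tS R K B) = tS R K (A * B) :=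
  le_antisymm ((tS_mono (mul_tS_le A B)).trans (tS_tS _).le)
    (tS_mono (mul_le_mul_right (le_tS B) A))

lemma tS_mul_tS_left (A B : Submodule R K) : tS R K (tS R K A * B) = tS R K (A * B) := by
  rw [mul_comm, tS_mul_tS_right, mul_comm]

lemma tS_mul_congr {A A' B B' : Submodule R K} (hA : tS R K A = tS R K A')
    (hB : tS R K B = tS R K B') : tS R K (A * B) = tS R K (A' * B') := by
  rw [← tS_mul_tS_left, ← tS_mul_tS_right, hA, hB, tS_mul_tS_right, tS_mul_tS_left]

lemma tS_pow_tS (B : Submodule R K) (n : ℕ) : tS R K (tS R K B ^ n) = tS R K (B ^ n) := by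
  induction n with
  | zero => rfl
  | succ n ih => rw [pow_succ, pow_succ, tS_mul_congr ih (tS_tS B)]

lemma isTRedS_tS_right_iff (J I : Submodule R K) :
    IsTRedS R K J (tS R K I) ↔ IsTRedS R K J I :=
  exists_congr fun n => by rw [tS_mul_congr rfl (tS_pow_tS I n), tS_pow_tS]

lemma isTRedS_tS_left_iff (J I : Submodule R K) :
    IsTRedS R K (tS R K J) I ↔ IsTRedS R K J I :=
  exists_congr fun n => by rw [tS_mul_tS_left]

end TOperation

theorem t_reduction_iff_t_reduction_of_t_closure_general (R K : Type*) [CommRing R]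
    [Field K] [Algebra R K]
    (J I : Ideal R) :
    (IsTRedS R K (idealToSub R K J) (idealToSub R K I) ↔
      IsTRedS R K (idealToSub R K J) (tI R K I)) ∧
    (IsTRedS R K (idealToSub R K J) (tI R K I) ↔
      IsTRedS R K (tI R K J) (tI R K I)) :=
  ⟨(isTRedS_tS_right_iff _ _).symm, (isTRedS_tS_left_iff _ _).symm⟩

/-- For nonzero ideals `J ⊆ I` of a domain `R`: `J` is a `t`-reduction of `I` iff `J` is a
`t`-reduction of `I_t`, iff `J_t` is a `t`-reduction of `I_t`. -/
theorem t_reduction_iff_t_reduction_of_t_closure (R K : Type*) [CommRing R] [IsDomain R]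
    [Field K] [Algebra R K] [IsFractionRing R K]
    (J I : Ideal R) (hJ0 : J ≠ 0) (hI0 : I ≠ 0) (hJI : J ≤ I) :
    (IsTRedS R K (idealToSub R K J) (idealToSub R K I) ↔
      IsTRedS R K (idealToSub R K J) (tI R K I)) ∧
    (IsTRedS R K (idealToSub R K J) (tI R K I) ↔
      IsTRedS R K (tI R K J) (tI R K I)) :=
  t_reduction_iff_t_reduction_of_t_closure_general R K J I
end

section
/- Let R be an integral domain, ★ a star operation on R, and K ⊆ J ⊆ I nonzero fractional ideals of R. If K is a ★-reduction of J and J is a ★-reduction of I, then K is a ★-reduction of I. -/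
/-! Since `(A B^★)^★ = (A B)^★`, equal `★`-closures may be multiplied by a common factor.
Iterating `(J I^m)^★ = (I^(m+1))^★` thus gives `(J^k I^m)^★ = (I^(m+k))^★` for every `k`, and
with `(K₀ J^n)^★ = (J^(n+1))^★` we get
`(I^(n+m+1))^★ = (J^(n+1) I^m)^★ = (K₀ J^n I^m)^★ ⊆ (K₀ I^(n+m))^★ ⊆ (I^(n+m+1))^★`. -/

open scoped nonZeroDivisors

/-- A star operation on a domain `R` with fraction field `K`: a map on (nonzero) fractional
ideals satisfying `(xR)^★ = xR`, `(xI)^★ = x I^★`, `I ⊆ I^★`, monotonicity, and idempotency. -/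
structure StarOperation (R K : Type*) [CommRing R] [IsDomain R] [Field K] [Algebra R K]
    [IsFractionRing R K] where
  star : FractionalIdeal R⁰ K → FractionalIdeal R⁰ K
  star_spanSingleton : ∀ x : K, x ≠ 0 →
    star (FractionalIdeal.spanSingleton R⁰ x) = FractionalIdeal.spanSingleton R⁰ x
  star_spanSingleton_mul : ∀ (x : K) (I : FractionalIdeal R⁰ K), x ≠ 0 → I ≠ 0 →
    star (FractionalIdeal.spanSingleton R⁰ x * I) = FractionalIdeal.spanSingleton R⁰ x * star I
  le_star : ∀ I : FractionalIdeal R⁰ K, I ≠ 0 → I ≤ star I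
  star_mono : ∀ I J : FractionalIdeal R⁰ K, I ≠ 0 → I ≤ J → star I ≤ star J
  star_star : ∀ I : FractionalIdeal R⁰ K, I ≠ 0 → star (star I) = star I

/-- `J` is a `★`-reduction of `I` if `(J · I^n)^★ = (I^(n+1))^★` for some integer `n ≥ 0`. -/
def IsStarReduction {R K : Type*} [CommRing R] [IsDomain R] [Field K] [Algebra R K]
    [IsFractionRing R K] (s : StarOperation R K) (J I : FractionalIdeal R⁰ K) : Prop :=
  ∃ n : ℕ, s.star (J * I ^ n) = s.star (I ^ (n + 1))

instance FractionalIdeal.instNoZeroDivisors {R P : Type*} [CommRing R] {S : Submonoid R}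
    [CommRing P] [Algebra R P] [NoZeroDivisors P] : NoZeroDivisors (FractionalIdeal S P) :=
  Function.Injective.noZeroDivisors _ FractionalIdeal.coeToSubmodule_injective
    FractionalIdeal.coe_zero FractionalIdeal.coe_mul

namespace StarOperation

variable {R K : Type*} [CommRing R] [IsDomain R] [Field K] [Algebra R K] [IsFractionRing R K]
  (s : StarOperation R K) {A B C : FractionalIdeal R⁰ K}

theorem star_ne_zero (hA : A ≠ 0) : s.star A ≠ 0 :=
  ne_bot_of_le_ne_bot hA (s.le_star A hA)

theorem mul_star_le_star_mul (hB : B ≠ 0) : A * s.star B ≤ s.star (A * B) := by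
  refine FractionalIdeal.mul_le.mpr fun a ha b hb ↦ ?_
  rcases eq_or_ne a 0 with rfl | ha0
  · simpa only [zero_mul] using (s.star (A * B)).zero_mem
  have hspan : FractionalIdeal.spanSingleton R⁰ a ≠ 0 :=
    FractionalIdeal.spanSingleton_ne_zero_iff.mpr ha0
  -- `a • B^★ = (a • B)^★ ⊆ (A B)^★`
  have h : FractionalIdeal.spanSingleton R⁰ a * s.star B ≤ s.star (A * B) := by
    rw [← s.star_spanSingleton_mul a B ha0 hB]
    exact s.star_mono _ _ (mul_ne_zero hspan hB)
      (mul_le_mul_left (FractionalIdeal.spanSingleton_le_iff_mem.mpr ha) B)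
  exact h (FractionalIdeal.mul_mem_mul (FractionalIdeal.mem_spanSingleton_self _ _) hb)

theorem star_mul_star (hA : A ≠ 0) (hB : B ≠ 0) :
    s.star (A * s.star B) = s.star (A * B) := by
  refine le_antisymm ?_ (s.star_mono _ _ (mul_ne_zero hA hB)
    (mul_le_mul_right (s.le_star B hB) A))
  calc s.star (A * s.star B) ≤ s.star (s.star (A * B)) :=
        s.star_mono _ _ (mul_ne_zero hA (s.star_ne_zero hB)) (s.mul_star_le_star_mul hB)
    _ = s.star (A * B) := s.star_star _ (mul_ne_zero hA hB)

theorem star_mul_eq_star_mul_of_star_eq (hA : A ≠ 0) (hB : B ≠ 0) (hC : C ≠ 0)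
    (h : s.star A = s.star B) : s.star (A * C) = s.star (B * C) := by
  rw [mul_comm A, mul_comm B, ← s.star_mul_star hC hA, h, s.star_mul_star hC hB]

theorem star_pow_mul_pow_eq {J I : FractionalIdeal R⁰ K} (hJ : J ≠ 0) (hI : I ≠ 0) {m : ℕ}
    (h : s.star (J * I ^ m) = s.star (I ^ (m + 1))) (k : ℕ) :
    s.star (J ^ k * I ^ m) = s.star (I ^ (m + k)) := by
  induction k with
  | zero => rw [pow_zero, one_mul, add_zero]
  | succ k ih =>
    have hIm : I ^ m ≠ 0 := pow_ne_zero m hI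
    calc s.star (J ^ (k + 1) * I ^ m) = s.star (J ^ k * I ^ m * J) := by ring_nf
      _ = s.star (I ^ (m + k) * J) :=
        s.star_mul_eq_star_mul_of_star_eq (mul_ne_zero (pow_ne_zero k hJ) hIm)
          (pow_ne_zero _ hI) hJ ih
      _ = s.star (J * I ^ m * I ^ k) := by ring_nf
      _ = s.star (I ^ (m + 1) * I ^ k) :=
        s.star_mul_eq_star_mul_of_star_eq (mul_ne_zero hJ hIm) (pow_ne_zero _ hI)
          (pow_ne_zero k hI) h
      _ = s.star (I ^ (m + (k + 1))) := by ring_nf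

end StarOperation

/-- Transitivity of `★`-reduction: if `K₀` is a `★`-reduction of `J` and `J` is a
`★`-reduction of `I`, then `K₀` is a `★`-reduction of `I`. -/
theorem starReduction_trans (R K : Type*) [CommRing R] [IsDomain R] [Field K] [Algebra R K]
    [IsFractionRing R K] (s : StarOperation R K) (K₀ J I : FractionalIdeal R⁰ K)
    (hK0 : K₀ ≠ 0) (hJ0 : J ≠ 0) (hI0 : I ≠ 0) (hKJ : K₀ ≤ J) (hJI : J ≤ I)
    (h1 : IsStarReduction s K₀ J) (h2 : IsStarReduction s J I) :
    IsStarReduction s K₀ I := by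
  obtain ⟨n, hn⟩ := h1
  obtain ⟨m, hm⟩ := h2
  have hKI : K₀ * I ^ (n + m) ≤ I ^ (n + m + 1) := by
    rw [pow_succ']
    exact mul_le_mul_left (hKJ.trans hJI) _
  have hKJI : K₀ * J ^ n * I ^ m ≤ K₀ * I ^ (n + m) := by
    rw [pow_add, ← mul_assoc]
    exact mul_le_mul_left (mul_le_mul_right (pow_le_pow_left' hJI n) K₀) _
  refine ⟨n + m, le_antisymm (s.star_mono _ _ (mul_ne_zero hK0 (pow_ne_zero _ hI0)) hKI) ?_⟩
  calc s.star (I ^ (n + m + 1)) = s.star (J ^ (n + 1) * I ^ m) := by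
        rw [s.star_pow_mul_pow_eq hJ0 hI0 hm]; ring_nf
    _ = s.star (K₀ * J ^ n * I ^ m) :=
        s.star_mul_eq_star_mul_of_star_eq (pow_ne_zero _ hJ0)
          (mul_ne_zero hK0 (pow_ne_zero n hJ0)) (pow_ne_zero m hI0) hn.symm
    _ ≤ s.star (K₀ * I ^ (n + m)) :=
        s.star_mono _ _ (mul_ne_zero (mul_ne_zero hK0 (pow_ne_zero n hJ0)) (pow_ne_zero m hI0))
          hKJI
end

section
/- Let R be an integral domain, ★ a star operation on R, and let J ⊆ I and J' ⊆ I' be nonzero fractional ideals of R. If J is a ★-reduction of I and J' is a ★-reduction of I', then J + J' is a ★-reduction of I + I'. -/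
open scoped nonZeroDivisors

/-!
Put `S = I + I'`, `T = J + J'` and `N = n + n'`. Every monomial of `S ^ (N + 1)` lies in
`I ^ (n + 1) * S ^ n'` or in `I' ^ (n' + 1) * S ^ n`. As `I ^ (n + 1) ⊆ (J I ^ n)^★` and
`A^★ B ⊆ (A B)^★`, the first lies in `(J I ^ n S ^ n')^★ ⊆ (T S ^ N)^★`, and symmetrically for the
second; so `(S ^ (N + 1))^★ ⊆ (T S ^ N)^★`. The reverse inclusion is monotonicity, as `T ⊆ S`.
-/

namespace FractionalIdeal

variable {R P : Type*} [CommRing R] {S : Submonoid R} [CommRing P] [Algebra R P]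

instance [NoZeroDivisors P] : NoZeroDivisors (FractionalIdeal S P) :=
  coeToSubmodule_injective.noZeroDivisors _ coe_zero coe_mul

protected theorem add_le {I J L : FractionalIdeal S P} (hI : I ≤ L) (hJ : J ≤ L) : I + J ≤ L :=
  sup_eq_add I J ▸ sup_le hI hJ

theorem natCast_le_one (c : ℕ) : (c : FractionalIdeal S P) ≤ 1 := by
  induction c with
  | zero => exact zero_le _
  | succ c ih => push_cast; exact FractionalIdeal.add_le ih le_rfl

protected theorem sum_le {ι : Type*} {t : Finset ι} {f : ι → FractionalIdeal S P}
    {L : FractionalIdeal S P} (h : ∀ i ∈ t, f i ≤ L) : ∑ i ∈ t, f i ≤ L :=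
  Finset.sum_induction f (· ≤ L) (fun _ _ => FractionalIdeal.add_le) (zero_le L) h

/-- Every monomial of `(I + I') ^ (m + n + 1)` has `I`-degree `> m` or `I'`-degree `> n`. -/
theorem add_pow_add_add_one_le (I I' : FractionalIdeal S P) (m n : ℕ) :
    (I + I') ^ (m + n + 1) ≤ I ^ (m + 1) * (I + I') ^ n + I' ^ (n + 1) * (I + I') ^ m := by
  rw [add_pow]
  refine FractionalIdeal.sum_le fun k hk => ?_
  have hk : k ≤ m + n + 1 := Nat.lt_succ_iff.mp (Finset.mem_range.mp hk)
  refine (mul_le_of_le_one_right' (natCast_le_one _)).trans ?_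
  have hI : I ≤ I + I' := le_self_add
  have hI' : I' ≤ I + I' := le_add_self
  rcases le_or_gt (m + 1) k with hmk | hkm
  · obtain ⟨d, rfl⟩ := Nat.exists_eq_add_of_le hmk
    refine le_self_add.trans' ?_
    calc I ^ (m + 1 + d) * I' ^ (m + n + 1 - (m + 1 + d))
        = I ^ (m + 1) * (I ^ d * I' ^ (n - d)) := by
          rw [pow_add, mul_assoc, show m + n + 1 - (m + 1 + d) = n - d by omega]
      _ ≤ I ^ (m + 1) * ((I + I') ^ d * (I + I') ^ (n - d)) := by gcongr
      _ = I ^ (m + 1) * (I + I') ^ n := by rw [← pow_add, Nat.add_sub_cancel' (by omega)]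
  · refine le_add_self.trans' ?_
    calc I ^ k * I' ^ (m + n + 1 - k)
        = I' ^ (n + 1) * (I ^ k * I' ^ (m - k)) := by
          rw [show m + n + 1 - k = n + 1 + (m - k) by omega, pow_add]; ring
      _ ≤ I' ^ (n + 1) * ((I + I') ^ k * (I + I') ^ (m - k)) := by gcongr
      _ = I' ^ (n + 1) * (I + I') ^ m := by rw [← pow_add, Nat.add_sub_cancel' (by omega)]

end FractionalIdeal

namespace StarOperation

open FractionalIdeal

variable {R K : Type*} [CommRing R] [IsDomain R] [Field K] [Algebra R K] [IsFractionRing R K]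
  (s : StarOperation R K)

/-- It suffices to check on each principal `bR ⊆ B`, where `(bA)^★ = b A^★`. -/
theorem star_mul_le {A : FractionalIdeal R⁰ K} (hA : A ≠ 0) (B : FractionalIdeal R⁰ K) :
    s.star A * B ≤ s.star (A * B) := by
  rw [mul_comm]
  refine FractionalIdeal.mul_le.mpr fun b hb a ha => ?_
  obtain rfl | hb0 := eq_or_ne b 0
  · simpa using FractionalIdeal.zero_mem _
  have hbA : spanSingleton R⁰ b * A ≤ A * B := by
    rw [mul_comm]; exact mul_le_mul_right (spanSingleton_le_iff_mem.mpr hb) A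
  have := s.star_mono _ _ (mul_ne_zero (spanSingleton_ne_zero_iff.mpr hb0) hA) hbA
  rw [s.star_spanSingleton_mul b A hb0 hA] at this
  exact this (mul_mem_mul (mem_spanSingleton_self R⁰ b) ha)

theorem star_le_star_of_le_star {A B : FractionalIdeal R⁰ K} (hA : A ≠ 0) (hB : B ≠ 0)
    (h : A ≤ s.star B) : s.star A ≤ s.star B :=
  s.star_star B hB ▸ s.star_mono _ _ hA h

theorem pow_succ_mul_le_star {J I C T : FractionalIdeal R⁰ K} {n : ℕ} (hJ : J ≠ 0) (hI : I ≠ 0)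
    (hC : C ≠ 0) (hn : s.star (J * I ^ n) = s.star (I ^ (n + 1))) (hle : J * I ^ n * C ≤ T) :
    I ^ (n + 1) * C ≤ s.star T := by
  have hJI : J * I ^ n ≠ 0 := mul_ne_zero hJ (pow_ne_zero n hI)
  calc I ^ (n + 1) * C ≤ s.star (I ^ (n + 1)) * C := by
        gcongr; exact s.le_star _ (pow_ne_zero _ hI)
    _ = s.star (J * I ^ n) * C := by rw [hn]
    _ ≤ s.star (J * I ^ n * C) := s.star_mul_le hJI C
    _ ≤ s.star T := s.star_mono _ _ (mul_ne_zero hJI hC) hle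

end StarOperation

/-- If `J` is a `★`-reduction of `I` and `J'` is a `★`-reduction of `I'`, then `J + J'` is a
`★`-reduction of `I + I'`. -/
theorem starReduction_add (R K : Type*) [CommRing R] [IsDomain R] [Field K] [Algebra R K]
    [IsFractionRing R K] (s : StarOperation R K) (J I J' I' : FractionalIdeal R⁰ K)
    (hJ0 : J ≠ 0) (hI0 : I ≠ 0) (hJ'0 : J' ≠ 0) (hI'0 : I' ≠ 0)
    (hJI : J ≤ I) (hJ'I' : J' ≤ I')
    (h : IsStarReduction s J I) (h' : IsStarReduction s J' I') :
    IsStarReduction s (J + J') (I + I') := by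
  obtain ⟨n, hn⟩ := h
  obtain ⟨n', hn'⟩ := h'
  set S := I + I'
  set T := J + J'
  have hS : S ≠ 0 := ne_bot_of_le_ne_bot hI0 le_self_add
  have hT : T ≠ 0 := ne_bot_of_le_ne_bot hJ0 le_self_add
  have hTS : T * S ^ (n + n') ≠ 0 := mul_ne_zero hT (pow_ne_zero _ hS)
  have hIS : J * I ^ n * S ^ n' ≤ T * S ^ (n + n') := by
    rw [pow_add, ← mul_assoc]; gcongr
    exacts [le_self_add, le_self_add]
  have hI'S : J' * I' ^ n' * S ^ n ≤ T * S ^ (n + n') := by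
    rw [add_comm n, pow_add, ← mul_assoc]; gcongr
    exacts [le_add_self, le_add_self]
  refine ⟨n + n', le_antisymm ?_ ?_⟩
  · refine s.star_mono _ _ hTS ?_
    rw [pow_succ']
    gcongr
    exact add_le_add hJI hJ'I'
  · refine s.star_le_star_of_le_star (pow_ne_zero _ hS) hTS ?_
    calc S ^ (n + n' + 1) ≤ I ^ (n + 1) * S ^ n' + I' ^ (n' + 1) * S ^ n :=
          FractionalIdeal.add_pow_add_add_one_le I I' n n'
      _ ≤ s.star (T * S ^ (n + n')) := FractionalIdeal.add_le
          (s.pow_succ_mul_le_star hJ0 hI0 (pow_ne_zero _ hS) hn hIS)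
          (s.pow_succ_mul_le_star hJ'0 hI'0 (pow_ne_zero _ hS) hn' hI'S)
end

section
/- Let k ⊆ K be fields and W a k-vector subspace of K with k ⊆ W. If W^n = W^(n+1) for some positive integer n and K is algebraic over k, then W^n is a field. -/
theorem pow_add_eq_pow_of_pow_eq_pow_succ {M : Type*} [Monoid M] {a : M} {n : ℕ}
    (h : a ^ n = a ^ (n + 1)) : ∀ m : ℕ, a ^ (n + m) = a ^ n
  | 0 => rfl
  | m + 1 => by
    rw [← add_assoc, pow_succ, pow_add_eq_pow_of_pow_eq_pow_succ h m, ← pow_succ, ← h]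

theorem isIdempotentElem_pow_of_pow_eq_pow_succ {M : Type*} [Monoid M] {a : M} {n : ℕ}
    (h : a ^ n = a ^ (n + 1)) : IsIdempotentElem (a ^ n) := by
  rw [IsIdempotentElem, ← pow_add, pow_add_eq_pow_of_pow_eq_pow_succ h]

/-- Over an algebraic extension every subalgebra is a field. -/
theorem Submodule.exists_subfield_coe_eq_of_isIdempotentElem {k K : Type*} [Field k] [Field K]
    [Algebra k K] [Algebra.IsAlgebraic k K] {V : Submodule k K} (h1 : (1 : K) ∈ V)
    (hV : IsIdempotentElem V) : ∃ F : Subfield K, (V : Set K) = F := by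
  let S : Subalgebra k K :=
    V.toSubalgebra h1 fun _ _ hx hy ↦ hV.eq ▸ Submodule.mul_mem_mul hx hy
  exact ⟨(S.toIntermediateField' S.isField_of_algebraic).toSubfield, rfl⟩

theorem pow_isField_of_pow_eq_pow_succ_general (k K : Type*) [Field k] [Field K] [Algebra k K]
    [Algebra.IsAlgebraic k K] (W : Submodule k K) (h1 : (1 : K) ∈ W)
    (n : ℕ) (h : W ^ n = W ^ (n + 1)) :
    ∃ F : Subfield K, (↑(W ^ n) : Set K) = (↑F : Set K) := by
  have h1n : (1 : K) ∈ W ^ n := by simpa using Submodule.pow_mem_pow W h1 n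
  exact Submodule.exists_subfield_coe_eq_of_isIdempotentElem h1n
    (isIdempotentElem_pow_of_pow_eq_pow_succ h)

/-- Let `k ⊆ K` be fields with `K` algebraic over `k`, and `W` a `k`-subspace of `K`
containing `k`. If `W^n = W^(n+1)` for some positive `n`, then `W^n` is a field. -/
theorem pow_isField_of_pow_eq_pow_succ (k K : Type*) [Field k] [Field K] [Algebra k K]
    [Algebra.IsAlgebraic k K] (W : Submodule k K) (h1 : (1 : K) ∈ W)
    (n : ℕ) (hn : 0 < n) (h : W ^ n = W ^ (n + 1)) :
    ∃ F : Subfield K, (↑(W ^ n) : Set K) = (↑F : Set K) :=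
  pow_isField_of_pow_eq_pow_succ_general k K W h1 n h
end

section
/- Let R be a domain where reduction and t-reduction coincide for all nonzero ideals. If R is a Prüfer v-multiplication domain (every nonzero finitely generated ideal is t-invertible), then R is a Prüfer domain. -/
/-!
Since `I * I⁻¹ ≤ R`, it is the image of an ideal `A` of `R`, and `R` being a PvMD says `A_t = R`.
Then `A * R^0 = A` and `R^1 = R` have the same `t`-closure, so `A` is a `t`-reduction of `R`, hence a
reduction of `R`: `A * R^n = R^(n+1)`, i.e. `A = R`.
-/

open scoped nonZeroDivisors

namespace Submodule

variable {R K : Type*} [CommRing R] [Field K] [Algebra R K]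

theorem le_vS (I : Submodule R K) : I ≤ vS R K I :=
  le_div_iff_mul_le.mpr mul_one_div_le_one

theorem vS_le_one {I : Submodule R K} (hI : I ≤ 1) : vS R K I ≤ 1 := fun x hx => by
  simpa using hx 1 (one_mem_div.mpr hI)

theorem tS_le_one {I : Submodule R K} (hI : I ≤ 1) : tS R K I ≤ 1 :=
  iSup₂_le fun _ hJ => vS_le_one (hJ.2.2.trans hI)

theorem tS_bot : tS R K ⊥ = ⊥ :=
  iSup₂_eq_bot.mpr fun _ hJ => absurd (le_bot_iff.mp hJ.2.2) hJ.1

theorem one_ne_bot : (1 : Submodule R K) ≠ ⊥ := fun h => by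
  simpa [h] using algebraMap_mem (R := R) (A := K) 1

theorem tS_one : tS R K 1 = 1 := by
  refine le_antisymm (tS_le_one le_rfl) ?_
  have hfg : (1 : Submodule R K).FG := ⟨{1}, by simp [one_eq_span]⟩
  exact (le_vS 1).trans (le_iSup₂_of_le 1 ⟨one_ne_bot, hfg, le_rfl⟩ le_rfl)

end Submodule

section IdealToSub

variable (R K : Type*) [CommRing R] [Field K] [Algebra R K]

theorem idealToSub_top : idealToSub R K ⊤ = 1 := by
  rw [idealToSub, Submodule.map_top, Submodule.one_eq_range]

theorem idealToSub_bot : idealToSub R K ⊥ = ⊥ :=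
  Submodule.map_bot _

variable {R K}

theorem exists_idealToSub_eq {A : Submodule R K} (hA : A ≤ 1) :
    ∃ J : Ideal R, idealToSub R K J = A := by
  rw [Submodule.one_eq_range] at hA
  exact ⟨A.comap (Algebra.linearMap R K), Submodule.map_comap_eq_of_le hA⟩

theorem tI_top : tI R K ⊤ = 1 := by
  rw [tI, idealToSub_top, Submodule.tS_one]

theorem tI_ne_one_of_eq_bot {J : Ideal R} (hJ : J = ⊥) : tI R K J ≠ 1 := by
  rw [hJ, tI, idealToSub_bot, Submodule.tS_bot]
  exact Submodule.one_ne_bot.symm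

end IdealToSub

section Reduction

variable {R : Type*} [CommRing R]

def Ideal.IsReduction (J I : Ideal R) : Prop :=
  ∃ n : ℕ, J * I ^ n = I ^ (n + 1)

def Ideal.IsTReduction (K : Type*) [Field K] [Algebra R K] (J I : Ideal R) : Prop :=
  ∃ n : ℕ, tI R K (J * I ^ n) = tI R K (I ^ (n + 1))

theorem Ideal.isReduction_top_iff {J : Ideal R} : J.IsReduction ⊤ ↔ J = ⊤ := by
  simp only [Ideal.IsReduction, Ideal.top_pow, Ideal.mul_top, exists_const]

theorem Ideal.isTReduction_top_of_tI_eq_one {K : Type*} [Field K] [Algebra R K] {J : Ideal R}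
    (hJ : tI R K J = 1) : J.IsTReduction K ⊤ :=
  ⟨0, by rw [pow_zero, mul_one, pow_one, hJ, tI_top]⟩

theorem Ideal.eq_top_of_tI_eq_one {K : Type*} [Field K] [Algebra R K]
    (hreduction : ∀ J : Ideal R, J ≠ 0 → J.IsTReduction K ⊤ → J.IsReduction ⊤)
    {J : Ideal R} (hJ : tI R K J = 1) : J = ⊤ :=
  isReduction_top_iff.mp <|
    hreduction J (fun h => tI_ne_one_of_eq_bot h hJ) (isTReduction_top_of_tI_eq_one hJ)

end Reduction

theorem pruefer_of_pvmd_of_reduction_eq_tReduction_general (R Q : Type*) [CommRing R]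
    [Field Q] [Algebra R Q]
    (hcoincide : ∀ J I : Ideal R, J ≠ 0 → I ≠ 0 → J ≤ I →
      ((∃ n : ℕ, tI R Q (J * I ^ n) = tI R Q (I ^ (n + 1))) ↔
        (∃ n : ℕ, J * I ^ n = I ^ (n + 1))))
    (hpvmd : ∀ I : Ideal R, I ≠ 0 → I.FG →
      tS R Q (idealToSub R Q I * (1 / idealToSub R Q I)) = 1) :
    ∀ I : Ideal R, I ≠ 0 → I.FG → idealToSub R Q I * (1 / idealToSub R Q I) = 1 := by
  have : Nontrivial R := (algebraMap R Q).domain_nontrivial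
  have htReduction (J : Ideal R) (hJ : J ≠ 0) : J.IsTReduction Q ⊤ → J.IsReduction ⊤ :=
    (hcoincide J ⊤ hJ top_ne_bot le_top).mp
  intro I hI hIfg
  obtain ⟨A, hA⟩ := exists_idealToSub_eq (Submodule.mul_one_div_le_one (I := idealToSub R Q I))
  have hAt : tI R Q A = 1 := by rw [tI, hA]; exact hpvmd I hI hIfg
  rw [← hA, Ideal.eq_top_of_tI_eq_one htReduction hAt, idealToSub_top]

/-- If reduction and `t`-reduction coincide for all nonzero ideals of the domain `R` and `R`
is a PvMD (every nonzero finitely generated ideal is `t`-invertible), then `R` is a Prüfer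
domain (every nonzero finitely generated ideal is invertible). -/
theorem pruefer_of_pvmd_of_reduction_eq_tReduction (R Q : Type*) [CommRing R] [IsDomain R]
    [Field Q] [Algebra R Q] [IsFractionRing R Q]
    (hcoincide : ∀ J I : Ideal R, J ≠ 0 → I ≠ 0 → J ≤ I →
      ((∃ n : ℕ, tI R Q (J * I ^ n) = tI R Q (I ^ (n + 1))) ↔
        (∃ n : ℕ, J * I ^ n = I ^ (n + 1))))
    (hpvmd : ∀ I : Ideal R, I ≠ 0 → I.FG →
      tS R Q (idealToSub R Q I * (1 / idealToSub R Q I)) = 1) :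
    ∀ I : Ideal R, I ≠ 0 → I.FG → idealToSub R Q I * (1 / idealToSub R Q I) = 1 :=
  pruefer_of_pvmd_of_reduction_eq_tReduction_general R Q hcoincide hpvmd
end
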